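/- arXiv:2506.09681 — 4 statements merged into one kernel-verified Lean document; each statement's English description precedes it below -/
import Mathlib

section
/- Let P be a probability measure on ℝ^D and α, β > 0. Define π_Y(y) = ∫ (2πβ²)^{-D/2} exp(−‖y−αx‖²/(2β²)) dP(x), which is the density of Y = αX + βξ when X ∼ P and ξ ∼ N(0, I_D) are independent. Then π_Y is everywhere positive and differentiable on ℝ^D, and for every y ∈ ℝ^D, ∇ log π_Y(y) = (α/β²)·m(y) − y/β², where m(y) = (∫ x · exp(−‖y−αx‖²/(2β²)) dP(x)) / (∫ exp(−‖y−αx‖²/(2β²)) dP(x)) is the posterior mean of X given Y = y (Tweedie's formula). -/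
open MeasureTheory
open scoped ENNReal

/-- The density of `Y = αX + βξ`, `X ∼ P`, `ξ ∼ N(0, I_D)` independent:
`π_Y(y) = ∫ (2πβ²)^{-D/2} exp(−‖y − αx‖²/(2β²)) dP(x)`. -/
noncomputable def smoothedDensity {D : ℕ} (P : Measure (EuclideanSpace ℝ (Fin D)))
    (α β : ℝ) (y : EuclideanSpace ℝ (Fin D)) : ℝ :=
  ∫ x, (2 * Real.pi * β ^ 2) ^ (-(D : ℝ) / 2) *
    Real.exp (-‖y - α • x‖ ^ 2 / (2 * β ^ 2)) ∂P

/-- The posterior mean of `X` given `Y = y`: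
`m(y) = (∫ x e^{−‖y−αx‖²/(2β²)} dP(x)) / (∫ e^{−‖y−αx‖²/(2β²)} dP(x))`. -/
noncomputable def posteriorMean {D : ℕ} (P : Measure (EuclideanSpace ℝ (Fin D)))
    (α β : ℝ) (y : EuclideanSpace ℝ (Fin D)) : EuclideanSpace ℝ (Fin D) :=
  (∫ x, Real.exp (-‖y - α • x‖ ^ 2 / (2 * β ^ 2)) ∂P)⁻¹ •
    ∫ x, Real.exp (-‖y - α • x‖ ^ 2 / (2 * β ^ 2)) • x ∂P

/-!
With `k(y, x) = exp (-‖y - αx‖² / (2β²))` we have `π_Y(y) = C ∫ k(y, x) dP(x)`, and the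
`y`-gradient of the kernel is `β⁻² k(y, x) (αx - y)`. Since `t e^{-t²/(2β²)} ≤ β`, this gradient
is bounded by `β⁻¹` uniformly in `x` and `y`, so differentiation under the integral sign is
justified for every probability measure `P`, with no moment assumption. The same bound, through
`αx = (αx - y) + y`, makes `x ↦ k(y, x) x` integrable. Dividing `∇π_Y` by `π_Y` gives the formula.
-/

open InnerProductSpace Filter Topology

theorem mul_exp_neg_sq_div_le {β : ℝ} (hβ : 0 < β) (t : ℝ) :
    t * Real.exp (-t ^ 2 / (2 * β ^ 2)) ≤ β := by
  have hexp : t ^ 2 / (2 * β ^ 2) + 1 ≤ Real.exp (t ^ 2 / (2 * β ^ 2)) := Real.add_one_le_exp _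
  rw [neg_div, Real.exp_neg, mul_inv_le_iff₀ (Real.exp_pos _)]
  calc t ≤ β * (t ^ 2 / (2 * β ^ 2) + 1) := by
        rw [mul_add, mul_one, ← sub_nonneg]
        field_simp
        nlinarith [sq_nonneg (t - β)]
    _ ≤ β * Real.exp (t ^ 2 / (2 * β ^ 2)) := by gcongr

section Gradient

variable {E : Type*} [NormedAddCommGroup E] [InnerProductSpace ℝ E] [CompleteSpace E]
  {f : E → ℝ} {f' : E} {x : E}

theorem HasGradientAt.const_mul (c : ℝ) (hf : HasGradientAt f f' x) :
    HasGradientAt (fun y => c * f y) (c • f') x := by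
  rw [hasGradientAt_iff_hasFDerivAt, map_smul] at *
  exact hf.const_mul c

theorem HasGradientAt.log (hf : HasGradientAt f f' x) (hx : f x ≠ 0) :
    HasGradientAt (fun y => Real.log (f y)) ((f x)⁻¹ • f') x := by
  rw [hasGradientAt_iff_hasFDerivAt, map_smul] at *
  exact hf.log hx

theorem hasGradientAt_integral_of_dominated_of_gradient_le {Ω : Type*} [MeasurableSpace Ω]
    {μ : Measure Ω} {F : E → Ω → ℝ} {G : E → Ω → E} {x₀ : E} {s : Set E} {bound : Ω → ℝ}
    (hs : s ∈ 𝓝 x₀) (hF_meas : ∀ᶠ x in 𝓝 x₀, AEStronglyMeasurable (F x) μ)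
    (hF_int : Integrable (F x₀) μ) (hG_meas : AEStronglyMeasurable (G x₀) μ)
    (h_bound : ∀ᵐ a ∂μ, ∀ x ∈ s, ‖G x a‖ ≤ bound a) (bound_integrable : Integrable bound μ)
    (h_diff : ∀ᵐ a ∂μ, ∀ x ∈ s, HasGradientAt (F · a) (G x a) x) :
    HasGradientAt (fun x => ∫ a, F x a ∂μ) (∫ a, G x₀ a ∂μ) x₀ := by
  have hG_int : Integrable (G x₀) μ :=
    bound_integrable.mono' hG_meas (h_bound.mono fun a ha => ha x₀ (mem_of_mem_nhds hs))
  have hdual_meas := (toDual ℝ E).continuous.comp_aestronglyMeasurable hG_meas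
  have hdual_int : Integrable (fun a => toDual ℝ E (G x₀ a)) μ :=
    hG_int.norm.mono' hdual_meas (ae_of_all _ fun a => (LinearIsometryEquiv.norm_map _ _).le)
  have key := hasFDerivAt_integral_of_dominated_of_fderiv_le
    (F' := fun x a => toDual ℝ E (G x a)) hs hF_meas hF_int hdual_meas
    (h_bound.mono fun a ha x hx => by simpa using ha x hx) bound_integrable
    (h_diff.mono fun a ha x hx => (ha x hx).hasFDerivAt)
  rw [hasGradientAt_iff_hasFDerivAt]
  refine key.congr_fderiv (ContinuousLinearMap.ext fun w => ?_)
  rw [ContinuousLinearMap.integral_apply hdual_int]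
  simp only [toDual_apply_apply, real_inner_comm w]
  exact integral_inner hG_int w

end Gradient

section GaussianKernel

variable {E : Type*} [NormedAddCommGroup E] [InnerProductSpace ℝ E]

noncomputable def gaussianKernel (α β : ℝ) (y x : E) : ℝ :=
  Real.exp (-‖y - α • x‖ ^ 2 / (2 * β ^ 2))

theorem gaussianKernel_pos (α β : ℝ) (y x : E) : 0 < gaussianKernel α β y x :=
  Real.exp_pos _

theorem gaussianKernel_le_one (α β : ℝ) (y x : E) : gaussianKernel α β y x ≤ 1 :=
  Real.exp_le_one_iff.mpr (div_nonpos_of_nonpos_of_nonneg (by simp) (by positivity))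

theorem continuous_gaussianKernel (α β : ℝ) (y : E) : Continuous (gaussianKernel α β y) := by
  unfold gaussianKernel
  fun_prop

theorem norm_gaussianKernel_smul_sub_le {β : ℝ} (hβ : 0 < β) (α : ℝ) (y x : E) :
    ‖gaussianKernel α β y x • (α • x - y)‖ ≤ β := by
  rw [norm_smul, Real.norm_of_nonneg (gaussianKernel_pos α β y x).le, norm_sub_rev, mul_comm]
  exact mul_exp_neg_sq_div_le hβ _

theorem hasGradientAt_gaussianKernel [CompleteSpace E] (α β : ℝ) (y x : E) :
    HasGradientAt (gaussianKernel α β · x)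
      ((β ^ 2)⁻¹ • gaussianKernel α β y x • (α • x - y)) y := by
  have hsq : HasFDerivAt (fun z => ‖z - α • x‖ ^ 2) _ y :=
    ((hasFDerivAt_id y).sub_const (α • x)).norm_sq
  have hexp := (hsq.const_mul (-(2 * β ^ 2)⁻¹)).exp
  rw [hasGradientAt_iff_hasFDerivAt]
  refine (hexp.congr_fderiv (ContinuousLinearMap.ext fun w => ?_)).congr_of_eventuallyEq ?_
  · simp only [gaussianKernel, toDual_apply_apply, smul_apply, ContinuousLinearMap.comp_id,
      coe_innerSL_apply, id_eq, inner_sub_left, real_inner_smul_left, smul_eq_mul, nsmul_eq_mul,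
      Nat.cast_ofNat]
    ring_nf
  · exact Eventually.of_forall fun z => by simp only [gaussianKernel]; ring_nf

end GaussianKernel

section Integrals

variable {E : Type*} [NormedAddCommGroup E] [InnerProductSpace ℝ E]
  [MeasurableSpace E] [OpensMeasurableSpace E] (μ : Measure E) [IsFiniteMeasure μ]

theorem integrable_gaussianKernel (α β : ℝ) (y : E) : Integrable (gaussianKernel α β y) μ :=
  (integrable_const (1 : ℝ)).mono' (continuous_gaussianKernel α β y).aestronglyMeasurable
    (ae_of_all _ fun x => by
      rw [Real.norm_of_nonneg (gaussianKernel_pos α β y x).le]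
      exact gaussianKernel_le_one α β y x)

theorem integral_gaussianKernel_pos [NeZero μ] (α β : ℝ) (y : E) :
    0 < ∫ x, gaussianKernel α β y x ∂μ :=
  integral_exp_pos (integrable_gaussianKernel μ α β y)

variable [SecondCountableTopology E]

theorem integrable_gaussianKernel_smul_sub {β : ℝ} (hβ : 0 < β) (α : ℝ) (y : E) :
    Integrable (fun x => gaussianKernel α β y x • (α • x - y)) μ :=
  (integrable_const β).mono'
    ((continuous_gaussianKernel α β y).smul
      ((continuous_id.const_smul α).sub continuous_const)).aestronglyMeasurable
    (ae_of_all _ (norm_gaussianKernel_smul_sub_le hβ α y))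

theorem integrable_gaussianKernel_smul {α β : ℝ} (hα : α ≠ 0) (hβ : 0 < β) (y : E) :
    Integrable (fun x => gaussianKernel α β y x • x) μ := by
  have h := ((integrable_gaussianKernel_smul_sub μ hβ α y).add
    ((integrable_gaussianKernel μ α β y).smul_const y)).smul α⁻¹
  refine h.congr (ae_of_all _ fun x => ?_)
  simp only [Pi.smul_apply, Pi.add_apply]
  rw [← smul_add, sub_add_cancel, smul_comm, inv_smul_smul₀ hα]

theorem integral_gaussianKernel_smul_sub [CompleteSpace E] {α β : ℝ} (hα : α ≠ 0) (hβ : 0 < β)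
    (y : E) :
    ∫ x, gaussianKernel α β y x • (α • x - y) ∂μ
      = α • ∫ x, gaussianKernel α β y x • x ∂μ - (∫ x, gaussianKernel α β y x ∂μ) • y := by
  have hint : Integrable (fun x => α • gaussianKernel α β y x • x) μ :=
    (integrable_gaussianKernel_smul μ hα hβ y).smul α
  simp only [smul_sub, smul_comm _ α]
  rw [integral_sub hint ((integrable_gaussianKernel μ α β y).smul_const y), integral_smul,
    integral_smul_const]

theorem hasGradientAt_integral_gaussianKernel [CompleteSpace E] {α β : ℝ} (hα : α ≠ 0)
    (hβ : 0 < β) (y : E) :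
    HasGradientAt (fun z => ∫ x, gaussianKernel α β z x ∂μ)
      ((β ^ 2)⁻¹ • (α • ∫ x, gaussianKernel α β y x • x ∂μ
        - (∫ x, gaussianKernel α β y x ∂μ) • y)) y := by
  have h := hasGradientAt_integral_of_dominated_of_gradient_le (μ := μ)
    (bound := fun _ => (β ^ 2)⁻¹ * β) univ_mem
    (Eventually.of_forall fun z => (continuous_gaussianKernel α β z).aestronglyMeasurable)
    (integrable_gaussianKernel μ α β y)
    ((integrable_gaussianKernel_smul_sub μ hβ α y).smul (β ^ 2)⁻¹).aestronglyMeasurable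
    (ae_of_all _ fun x z _ => by
      rw [norm_smul, Real.norm_of_nonneg (by positivity)]
      exact mul_le_mul_of_nonneg_left (norm_gaussianKernel_smul_sub_le hβ α z x) (by positivity))
    (integrable_const _)
    (ae_of_all _ fun x z _ => hasGradientAt_gaussianKernel α β z x)
  rwa [integral_smul, integral_gaussianKernel_smul_sub μ hα hβ] at h

end Integrals

section Tweedie

variable {D : ℕ} (P : Measure (EuclideanSpace ℝ (Fin D)))

theorem smoothedDensity_eq (α β : ℝ) :
    smoothedDensity P α β
      = fun y => (2 * Real.pi * β ^ 2) ^ (-(D : ℝ) / 2) * ∫ x, gaussianKernel α β y x ∂P :=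
  funext fun _ => integral_const_mul _ _

theorem posteriorMean_eq (α β : ℝ) (y : EuclideanSpace ℝ (Fin D)) :
    posteriorMean P α β y
      = (∫ x, gaussianKernel α β y x ∂P)⁻¹ • ∫ x, gaussianKernel α β y x • x ∂P :=
  rfl

end Tweedie

/-- **Tweedie's formula.** For any probability measure `P` on `ℝ^D` and `α, β > 0`, the density
`π_Y` of `Y = αX + βξ` is everywhere positive and differentiable, and its log-gradient is
`∇ log π_Y(y) = (α/β²) m(y) − y/β²` where `m(y)` is the posterior mean of `X` given `Y = y`. -/
theorem tweedie_formula {D : ℕ} (P : Measure (EuclideanSpace ℝ (Fin D)))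
    [IsProbabilityMeasure P] (α β : ℝ) (hα : 0 < α) (hβ : 0 < β) :
    (∀ y, 0 < smoothedDensity P α β y) ∧
    Differentiable ℝ (smoothedDensity P α β) ∧
    ∀ y, HasGradientAt (fun z => Real.log (smoothedDensity P α β z))
      ((α / β ^ 2) • posteriorMean P α β y - (1 / β ^ 2) • y) y := by
  set C : ℝ := (2 * Real.pi * β ^ 2) ^ (-(D : ℝ) / 2)
  have hC : 0 < C := by positivity
  have hpos (y) : 0 < C * ∫ x, gaussianKernel α β y x ∂P :=
    mul_pos hC (integral_gaussianKernel_pos P α β y)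
  have hgrad (y) := (hasGradientAt_integral_gaussianKernel P hα.ne' hβ y).const_mul C
  rw [smoothedDensity_eq]
  refine ⟨hpos, fun y => (hgrad y).differentiableAt, fun y => ?_⟩
  convert (hgrad y).log (hpos y).ne' using 1
  have hI := (integral_gaussianKernel_pos P α β y).ne'
  rw [posteriorMean_eq]
  simp only [smul_sub, smul_smul]
  congr 2 <;> field_simp
end

section
/- Let (A_k)_{k∈ℕ}, (B_k)_{k∈ℕ} and (C_k)_{k∈ℕ} be sequences of real numbers with B_k ≥ 0 and C_k ≥ 0 for every k, and let (x_k)_{k∈ℕ} be a sequence of nonnegative real numbers satisfying, for every k ≥ 0, x_{k+1}² ≤ (e^{A_k} x_k + B_k)² + C_k². Then, setting Ā_k = A_0 + ⋯ + A_k, for every k ≥ 0 one has x_{k+1} ≤ e^{Ā_k} x_0 + Σ_{j=0}^{k} e^{Ā_k − Ā_j} B_j + (Σ_{j=0}^{k} e^{2(Ā_k − Ā_j)} C_j²)^{1/2}. -/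
/-!
Compare `x` with the solutions of the two linear recursions `ℓₙ₊₁ = e^{Aₙ} ℓₙ + Bₙ`, `ℓ₀ = x₀`
and `qₙ₊₁ = e^{2Aₙ} qₙ + Cₙ²`, `q₀ = 0`. The bound `xₙ ≤ ℓₙ + √qₙ` propagates by induction
because `√((u + v)² + c) ≤ u + √(v² + c)` for `u, c ≥ 0` (the triangle inequality for the
vectors `(u, 0)` and `(v, √c)`), and the closed forms of `ℓₖ₊₁` and `qₖ₊₁` are the two sums
of the statement.
-/

open Finset Real

namespace Real

theorem sqrt_add_sq_add_le {u v c : ℝ} (hu : 0 ≤ u) (hc : 0 ≤ c) :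
    √((u + v) ^ 2 + c) ≤ u + √(v ^ 2 + c) := by
  have hw : √(v ^ 2 + c) ^ 2 = v ^ 2 + c := sq_sqrt (by positivity)
  have hvw : v ≤ √(v ^ 2 + c) := (le_abs_self v).trans (abs_le_sqrt (by linarith))
  rw [sqrt_le_iff]
  exact ⟨by positivity, by nlinarith [mul_le_mul_of_nonneg_left hvw hu]⟩

end Real

noncomputable def expAffineRec (a b : ℕ → ℝ) (y₀ : ℝ) : ℕ → ℝ
  | 0 => y₀
  | n + 1 => exp (a n) * expAffineRec a b y₀ n + b n

namespace expAffineRec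

variable (a b : ℕ → ℝ) (y₀ : ℝ)

theorem nonneg (hy₀ : 0 ≤ y₀) (hb : ∀ n, 0 ≤ b n) (n : ℕ) : 0 ≤ expAffineRec a b y₀ n := by
  induction n with
  | zero => exact hy₀
  | succ n ih => exact add_nonneg (mul_nonneg (exp_pos _).le ih) (hb n)

theorem eq_sum (n : ℕ) :
    expAffineRec a b y₀ n = exp (∑ i ∈ range n, a i) * y₀ +
      ∑ j ∈ range n, exp (∑ i ∈ range n, a i - ∑ i ∈ range (j + 1), a i) * b j := by
  induction n with
  | zero => simp [expAffineRec]
  | succ n ih =>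
    have hterm : ∀ j ∈ range n,
        exp (a n) * (exp (∑ i ∈ range n, a i - ∑ i ∈ range (j + 1), a i) * b j) =
          exp (∑ i ∈ range (n + 1), a i - ∑ i ∈ range (j + 1), a i) * b j := by
      intro j _
      rw [← mul_assoc, ← exp_add, sum_range_succ a n]
      ring_nf
    rw [expAffineRec, ih, sum_range_succ (fun j => _ * b j) n, sub_self, exp_zero, one_mul,
      mul_add, mul_sum, sum_congr rfl hterm, sum_range_succ a n, exp_add]
    ring

end expAffineRec

theorem le_expAffineRec_add_sqrt (A B C x : ℕ → ℝ) (hB : ∀ k, 0 ≤ B k) (hx : ∀ k, 0 ≤ x k)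
    (hrec : ∀ k, x (k + 1) ^ 2 ≤ (exp (A k) * x k + B k) ^ 2 + C k ^ 2) (n : ℕ) :
    x n ≤ expAffineRec A B (x 0) n +
      √(expAffineRec (fun k => 2 * A k) (fun k => C k ^ 2) 0 n) := by
  induction n with
  | zero => simp [expAffineRec]
  | succ n ih =>
    set ℓ := expAffineRec A B (x 0) n
    set q := expAffineRec (fun k => 2 * A k) (fun k => C k ^ 2) 0 n
    have hq : 0 ≤ q := expAffineRec.nonneg _ _ _ le_rfl (fun k => sq_nonneg (C k)) n
    have hℓ : 0 ≤ ℓ := expAffineRec.nonneg _ _ _ (hx 0) hB n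
    have hstep : exp (A n) * x n + B n ≤ (exp (A n) * ℓ + B n) + exp (A n) * √q := by
      nlinarith [mul_le_mul_of_nonneg_left ih (exp_pos (A n)).le]
    calc x (n + 1) ≤ √((exp (A n) * x n + B n) ^ 2 + C n ^ 2) :=
          (le_abs_self _).trans (abs_le_sqrt (hrec n))
      _ ≤ √(((exp (A n) * ℓ + B n) + exp (A n) * √q) ^ 2 + C n ^ 2) := by
          gcongr
          exact add_nonneg (mul_nonneg (exp_pos _).le (hx n)) (hB n)
      _ ≤ (exp (A n) * ℓ + B n) + √((exp (A n) * √q) ^ 2 + C n ^ 2) :=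
          sqrt_add_sq_add_le (by have := hB n; positivity) (sq_nonneg _)
      _ = _ := by
          rw [mul_pow, sq_sqrt hq, ← exp_nat_mul]
          simp [expAffineRec, ℓ, q]

theorem recursion_unfolding_general (A B C x : ℕ → ℝ)
    (hB : ∀ k, 0 ≤ B k) (hx : ∀ k, 0 ≤ x k)
    (hrec : ∀ k, x (k + 1) ^ 2 ≤ (Real.exp (A k) * x k + B k) ^ 2 + C k ^ 2) :
    ∀ k, x (k + 1) ≤
      Real.exp (∑ i ∈ Finset.range (k + 1), A i) * x 0 +
      (∑ j ∈ Finset.range (k + 1),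
        Real.exp ((∑ i ∈ Finset.range (k + 1), A i) - ∑ i ∈ Finset.range (j + 1), A i) * B j) +
      Real.sqrt (∑ j ∈ Finset.range (k + 1),
        Real.exp (2 * ((∑ i ∈ Finset.range (k + 1), A i) - ∑ i ∈ Finset.range (j + 1), A i))
          * C j ^ 2) := by
  intro k
  have h := le_expAffineRec_add_sqrt A B C x hB hx hrec (k + 1)
  simpa only [expAffineRec.eq_sum, mul_zero, zero_add, ← mul_sum, ← mul_sub] using h

/-- Recursion lemma: unfolding the recursive inequality
`x_{k+1}² ≤ (e^{A_k} x_k + B_k)² + C_k²` yields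
`x_{k+1} ≤ e^{Ā_k} x_0 + Σ_j e^{Ā_k − Ā_j} B_j + (Σ_j e^{2(Ā_k − Ā_j)} C_j²)^{1/2}`,
where `Ā_k = A_0 + ⋯ + A_k`. -/
theorem recursion_unfolding (A B C x : ℕ → ℝ)
    (hB : ∀ k, 0 ≤ B k) (hC : ∀ k, 0 ≤ C k) (hx : ∀ k, 0 ≤ x k)
    (hrec : ∀ k, x (k + 1) ^ 2 ≤ (Real.exp (A k) * x k + B k) ^ 2 + C k ^ 2) :
    ∀ k, x (k + 1) ≤
      Real.exp (∑ i ∈ Finset.range (k + 1), A i) * x 0 +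
      (∑ j ∈ Finset.range (k + 1),
        Real.exp ((∑ i ∈ Finset.range (k + 1), A i) - ∑ i ∈ Finset.range (j + 1), A i) * B j) +
      Real.sqrt (∑ j ∈ Finset.range (k + 1),
        Real.exp (2 * ((∑ i ∈ Finset.range (k + 1), A i) - ∑ i ∈ Finset.range (j + 1), A i))
          * C j ^ 2) :=
  recursion_unfolding_general A B C x hB hx hrec
end

section
/- Let T and a ≥ 1 be real numbers with T ≥ (1/2)·log(6a), let t, h, φv be real numbers with 0 ≤ t ≤ T − (1/2)·log(6a), 0 ≤ h ≤ 0.7 and 0 ≤ φv ≤ a, and set α = e^{−(T−t)} and m = 1 + (2α²/(1−α²))·(1 − φv/(1−α²)). Then: (i) α² ≤ 1/(6a); (ii) m ≥ 1 + (2α²/(1−α²))·(1 − a/(1−α²)) ≥ 1/3; and (iii) h·((1+α²)/(1−α²) + m) ≤ 2. -/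
/-! Write `s = α²`. The hypothesis on `t` says `2(T − t) ≥ log(6a)`, i.e.
`s ≤ 1/(6a) ≤ 1/6`. On `[0, 1/6]` the deflation strength `m` is antitone in `φv`;
at `φv = a` the bound `2as ≤ 1/3` gives `m ≥ 1/3`, and at `φv = 0` one has
`(1+s)/(1−s) + m = 2(1+s)/(1−s) ≤ 14/5`, so a step size `h ≤ 0.7` keeps
`h((1+s)/(1−s) + m) ≤ 2`. -/

theorem Real.exp_neg_sq_le_one_div {x c : ℝ} (hc : 0 < c) (hx : Real.log c ≤ 2 * x) :
    Real.exp (-x) ^ 2 ≤ 1 / c := by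
  rw [← Real.exp_nat_mul, one_div, ← Real.exp_log hc, ← Real.exp_neg]
  exact Real.exp_le_exp.mpr (by push_cast; linarith)

/-- The deflation strength `m` of the paper, as a function of `s = α²` and `φv`. -/
noncomputable def deflationStrength (s φ : ℝ) : ℝ := 1 + 2 * s / (1 - s) * (1 - φ / (1 - s))

section deflationStrength

variable {s : ℝ}

theorem deflationStrength_le_deflationStrength {φ ψ : ℝ} (hs0 : 0 ≤ s) (hs1 : s < 1)
    (hφψ : φ ≤ ψ) : deflationStrength s ψ ≤ deflationStrength s φ := by
  have h1s : 0 < 1 - s := by linarith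
  unfold deflationStrength
  gcongr

theorem deflationStrength_le {φ : ℝ} (hs0 : 0 ≤ s) (hs1 : s < 1) (hφ : 0 ≤ φ) :
    deflationStrength s φ ≤ 1 + 2 * s / (1 - s) := by
  have h1s : 0 < 1 - s := by linarith
  unfold deflationStrength
  gcongr
  exact mul_le_of_le_one_right (by positivity) (by simp only [sub_le_self_iff]; positivity)

theorem one_third_le_deflationStrength {a : ℝ} (ha : 1 ≤ a) (hs0 : 0 ≤ s)
    (hsa : s ≤ 1 / (6 * a)) : 1 / 3 ≤ deflationStrength s a := by
  have h6as : 6 * a * s ≤ 1 := by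
    rwa [le_div_iff₀ (by linarith), mul_comm] at hsa
  have hs6 : s ≤ 1 / 6 := by nlinarith
  have h1s : 0 < 1 - s := by linarith
  have hm : deflationStrength s a = ((1 - s) ^ 2 + 2 * s * (1 - s - a)) / (1 - s) ^ 2 := by
    unfold deflationStrength
    field_simp
  rw [hm, le_div_iff₀ (by positivity)]
  nlinarith

theorem add_deflationStrength_le {φ : ℝ} (hs0 : 0 ≤ s) (hs6 : s ≤ 1 / 6) (hφ : 0 ≤ φ) :
    (1 + s) / (1 - s) + deflationStrength s φ ≤ 14 / 5 := by
  have h1s : 0 < 1 - s := by linarith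
  have hsum : (1 + s) / (1 - s) + (1 + 2 * s / (1 - s)) = 2 * (1 + s) / (1 - s) := by
    field_simp
    ring
  have hbound : 2 * (1 + s) / (1 - s) ≤ 14 / 5 := by
    rw [div_le_iff₀ h1s]
    linarith
  linarith [deflationStrength_le hs0 (by linarith) hφ]

end deflationStrength

theorem stepsize_contracting_regime_general (T a t h φv : ℝ)
    (ha : 1 ≤ a)
    (ht1 : t ≤ T - (1 / 2) * Real.log (6 * a))
    (hh1 : h ≤ 0.7) (hφ0 : 0 ≤ φv) (hφa : φv ≤ a) :
    Real.exp (-(T - t)) ^ 2 ≤ 1 / (6 * a) ∧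
    (1 + (2 * Real.exp (-(T - t)) ^ 2 / (1 - Real.exp (-(T - t)) ^ 2)) *
        (1 - a / (1 - Real.exp (-(T - t)) ^ 2)) ≤
      1 + (2 * Real.exp (-(T - t)) ^ 2 / (1 - Real.exp (-(T - t)) ^ 2)) *
        (1 - φv / (1 - Real.exp (-(T - t)) ^ 2)) ∧
      (1 : ℝ) / 3 ≤ 1 + (2 * Real.exp (-(T - t)) ^ 2 / (1 - Real.exp (-(T - t)) ^ 2)) *
        (1 - a / (1 - Real.exp (-(T - t)) ^ 2))) ∧
    h * ((1 + Real.exp (-(T - t)) ^ 2) / (1 - Real.exp (-(T - t)) ^ 2) +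
      (1 + (2 * Real.exp (-(T - t)) ^ 2 / (1 - Real.exp (-(T - t)) ^ 2)) *
        (1 - φv / (1 - Real.exp (-(T - t)) ^ 2)))) ≤ 2 := by
  set s := Real.exp (-(T - t)) ^ 2
  have hsa : s ≤ 1 / (6 * a) := Real.exp_neg_sq_le_one_div (by linarith) (by linarith)
  have hs0 : 0 ≤ s := by positivity
  have hs6 : s ≤ 1 / 6 := hsa.trans (by gcongr; linarith)
  have hlow : 1 / 3 ≤ deflationStrength s a := one_third_le_deflationStrength ha hs0 hsa
  have hmono : deflationStrength s a ≤ deflationStrength s φv :=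
    deflationStrength_le_deflationStrength hs0 (by linarith) hφa
  have hstep : 0 ≤ (1 + s) / (1 - s) + deflationStrength s φv := by
    have : 0 ≤ (1 + s) / (1 - s) := div_nonneg (by linarith) (by linarith)
    linarith
  refine ⟨hsa, ⟨hmono, hlow⟩, ?_⟩
  calc h * ((1 + s) / (1 - s) + deflationStrength s φv)
      ≤ 0.7 * (14 / 5) :=
        mul_le_mul hh1 (add_deflationStrength_le hs0 hs6 hφ0) hstep (by norm_num)
    _ ≤ 2 := by norm_num

/-- Strength of the deflation in the contracting regime: with `α = e^{−(T−t)}` and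
`m = 1 + (2α²/(1−α²))(1 − φv/(1−α²))`, under the stated conditions one has
(i) `α² ≤ 1/(6a)`, (ii) `m ≥ 1 + (2α²/(1−α²))(1 − a/(1−α²)) ≥ 1/3`, and
(iii) `h((1+α²)/(1−α²) + m) ≤ 2`. -/
theorem stepsize_contracting_regime (T a t h φv : ℝ)
    (ha : 1 ≤ a) (hT : (1 / 2) * Real.log (6 * a) ≤ T)
    (ht0 : 0 ≤ t) (ht1 : t ≤ T - (1 / 2) * Real.log (6 * a))
    (hh0 : 0 ≤ h) (hh1 : h ≤ 0.7) (hφ0 : 0 ≤ φv) (hφa : φv ≤ a) :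
    Real.exp (-(T - t)) ^ 2 ≤ 1 / (6 * a) ∧
    (1 + (2 * Real.exp (-(T - t)) ^ 2 / (1 - Real.exp (-(T - t)) ^ 2)) *
        (1 - a / (1 - Real.exp (-(T - t)) ^ 2)) ≤
      1 + (2 * Real.exp (-(T - t)) ^ 2 / (1 - Real.exp (-(T - t)) ^ 2)) *
        (1 - φv / (1 - Real.exp (-(T - t)) ^ 2)) ∧
      (1 : ℝ) / 3 ≤ 1 + (2 * Real.exp (-(T - t)) ^ 2 / (1 - Real.exp (-(T - t)) ^ 2)) *
        (1 - a / (1 - Real.exp (-(T - t)) ^ 2))) ∧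
    h * ((1 + Real.exp (-(T - t)) ^ 2) / (1 - Real.exp (-(T - t)) ^ 2) +
      (1 + (2 * Real.exp (-(T - t)) ^ 2 / (1 - Real.exp (-(T - t)) ^ 2)) *
        (1 - φv / (1 - Real.exp (-(T - t)) ^ 2)))) ≤ 2 :=
  stepsize_contracting_regime_general T a t h φv ha ht1 hh1 hφ0 hφa
end

section
/- Let 0 < α < 1, φv ≥ 0 and h > 0 be real numbers, set m = 1 + (2α²/(1−α²))·(1 − φv/(1−α²)), and assume h·((1+α²)/(1−α²) + m) ≤ 2. Let M be a real symmetric D×D matrix satisfying −(1/(1−α²))·I_D ≼ M ≼ −(1/(1−α²))·(1 − α²φv/(1−α²))·I_D. Then the operator norm of (1+h)·I_D + 2h·M satisfies ‖(1+h)·I_D + 2h·M‖ ≤ 1 − m·h. -/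
open scoped RealInnerProductSpace

/-!
The operator `(1 + h) I + 2h M` is self-adjoint, so its norm is the supremum of its Rayleigh
quotient in absolute value. The bounds on `M` confine that quotient to the interval
`[1 - h (1 + α²)/(1 - α²), 1 - m h]`: the right end is exactly `1 - m h`, and the step-size
condition on `h` says precisely that the left end is at least `-(1 - m h)`.
-/

variable {E : Type*} [NormedAddCommGroup E] [InnerProductSpace ℝ E]

theorem LinearMap.IsSymmetric.opNorm_le_of_abs_inner_le {T : E →L[ℝ] E}
    (hT : (T : E →ₗ[ℝ] E).IsSymmetric) {C : ℝ} (hC : 0 ≤ C)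
    (hTC : ∀ v, |⟪v, T v⟫| ≤ C * ‖v‖ ^ 2) : ‖T‖ ≤ C := by
  rw [T.norm_eq_iSup_rayleighQuotient hT]
  refine ciSup_le fun v ↦ ?_
  rcases eq_or_ne v 0 with rfl | hv
  · simpa using hC
  rw [ContinuousLinearMap.rayleighQuotient, ContinuousLinearMap.reApplyInnerSelf_apply,
    RCLike.re_to_real, real_inner_comm, abs_div, abs_sq, div_le_iff₀ (by positivity)]
  exact hTC v

theorem LinearMap.IsSymmetric.opNorm_smul_id_add_smul_le {T : E →L[ℝ] E}
    (hT : (T : E →ₗ[ℝ] E).IsSymmetric) {a b c s C : ℝ} (hs : 0 ≤ s) (hC : 0 ≤ C)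
    (ha : ∀ v, a * ‖v‖ ^ 2 ≤ ⟪v, T v⟫) (hb : ∀ v, ⟪v, T v⟫ ≤ b * ‖v‖ ^ 2)
    (hlow : -C ≤ c + s * a) (hup : c + s * b ≤ C) :
    ‖c • ContinuousLinearMap.id ℝ E + s • T‖ ≤ C := by
  have hsym :
      ((c • ContinuousLinearMap.id ℝ E + s • T : E →L[ℝ] E) : E →ₗ[ℝ] E).IsSymmetric := by
    simpa using (LinearMap.IsSymmetric.id.smul (conj_trivial c)).add (hT.smul (conj_trivial s))
  refine hsym.opNorm_le_of_abs_inner_le hC fun v ↦ abs_le.2 ⟨?_, ?_⟩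
  all_goals
    simp only [_root_.add_apply, _root_.smul_apply, ContinuousLinearMap.id_apply,
      inner_add_right, real_inner_smul_right, real_inner_self_eq_norm_sq]
  · nlinarith [mul_le_mul_of_nonneg_left (ha v) hs,
      mul_le_mul_of_nonneg_right hlow (sq_nonneg ‖v‖)]
  · nlinarith [mul_le_mul_of_nonneg_left (hb v) hs,
      mul_le_mul_of_nonneg_right hup (sq_nonneg ‖v‖)]

/-- Contraction lemma: if `M` is a symmetric operator on `ℝ^D` with
`−(1/(1−α²)) I ≼ M ≼ −(1/(1−α²))(1 − α²φv/(1−α²)) I`, and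
`m = 1 + (2α²/(1−α²))(1 − φv/(1−α²))` with `h((1+α²)/(1−α²) + m) ≤ 2`, then
`‖(1+h) I + 2h M‖ ≤ 1 − m h` in operator norm. -/
theorem opNorm_one_add_two_smul_le {D : ℕ} (α φv h : ℝ)
    (hα0 : 0 < α) (hα1 : α < 1) (hφ : 0 ≤ φv) (hh : 0 < h)
    (m : ℝ) (hm : m = 1 + (2 * α ^ 2 / (1 - α ^ 2)) * (1 - φv / (1 - α ^ 2)))
    (hcond : h * ((1 + α ^ 2) / (1 - α ^ 2) + m) ≤ 2)
    (M : EuclideanSpace ℝ (Fin D) →L[ℝ] EuclideanSpace ℝ (Fin D))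
    (hsym : IsSelfAdjoint M)
    (hlb : ∀ v : EuclideanSpace ℝ (Fin D), -(1 / (1 - α ^ 2)) * ‖v‖ ^ 2 ≤ ⟪v, M v⟫)
    (hub : ∀ v : EuclideanSpace ℝ (Fin D),
      ⟪v, M v⟫ ≤ -(1 / (1 - α ^ 2)) * (1 - α ^ 2 * φv / (1 - α ^ 2)) * ‖v‖ ^ 2) :
    ‖(1 + h) • (ContinuousLinearMap.id ℝ (EuclideanSpace ℝ (Fin D))) + (2 * h) • M‖ ≤
      1 - m * h := by
  have hβ : 0 < 1 - α ^ 2 := by nlinarith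
  have hup : (1 + h) + 2 * h * (-(1 / (1 - α ^ 2)) * (1 - α ^ 2 * φv / (1 - α ^ 2))) =
      1 - m * h := by
    rw [hm]; field_simp; ring
  have hlow : (1 + h) + 2 * h * -(1 / (1 - α ^ 2)) = 1 - h * ((1 + α ^ 2) / (1 - α ^ 2)) := by
    field_simp; ring
  have hlow_le_up : (1 + h) + 2 * h * -(1 / (1 - α ^ 2)) ≤ 1 - m * h := by
    have : 0 ≤ 2 * h * (1 / (1 - α ^ 2)) * (α ^ 2 * φv / (1 - α ^ 2)) := by positivity
    linarith
  exact hsym.isSymmetric.opNorm_smul_id_add_smul_le (by positivity) (by linarith) hlb hub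
    (by linarith) hup.le
end
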